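/- arXiv:math/0212328 — 2 statements merged into one kernel-verified Lean document; each statement's English description precedes it below -/
import Mathlib

section
/- The number of Dyck paths of semilength n with no centered tunnel equals the Fine number F_n, where C_n = 2F_n + F_{n−1} for n ≥ 2, F_1 = 0, F_2 = 1. -/
/-- A Dyck word, encoded as a list of booleans (`true` = up-step, `false` = down-step). -/
def IsDyckWord (w : List Bool) : Prop :=
  w.count true = w.count false ∧ ∀ p : List Bool, p <+: w → p.count false ≤ p.count true

/-- `(A, B, C)` is a tunnel decomposition of `w`, i.e. `w = A u B d C` with `B` a Dyck word. -/
def IsTunnel (w A B C : List Bool) : Prop :=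
  w = A ++ true :: (B ++ false :: C) ∧ IsDyckWord B

/-- The number of tunnels of `w`. -/
noncomputable def numTunnels (w : List Bool) : ℕ :=
  Nat.card {T : List Bool × List Bool × List Bool // IsTunnel w T.1 T.2.1 T.2.2}

/-- The number of centered tunnels of `w` (`|A| = |C|`). -/
noncomputable def ct (w : List Bool) : ℕ :=
  Nat.card {T : List Bool × List Bool × List Bool //
    IsTunnel w T.1 T.2.1 T.2.2 ∧ T.1.length = T.2.2.length}

/-- The number of right tunnels of `w` (`|A| > |C|`). -/
noncomputable def rt (w : List Bool) : ℕ :=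
  Nat.card {T : List Bool × List Bool × List Bool //
    IsTunnel w T.1 T.2.1 T.2.2 ∧ T.2.2.length < T.1.length}

/-- The number of left tunnels of `w` (`|A| < |C|`). -/
noncomputable def lt (w : List Bool) : ℕ :=
  Nat.card {T : List Bool × List Bool × List Bool //
    IsTunnel w T.1 T.2.1 T.2.2 ∧ T.1.length < T.2.2.length}

/-- The height of the path `w` at its midpoint. -/
def heInt (w : List Bool) : ℤ :=
  ((w.take (w.length / 2)).count true : ℤ) - ((w.take (w.length / 2)).count false : ℤ)

open List Finset

lemma count_tf (l : List Bool) : l.count true + l.count false = l.length := by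
  induction l with
  | nil => simp
  | cons a t ih => cases a <;> simp [List.count_cons] <;> omega

lemma prefix_append_cases {p A B : List Bool} (h : p <+: A ++ B) :
    p <+: A ∨ ∃ q, q <+: B ∧ p = A ++ q := by
  rcases le_or_gt p.length A.length with hl | hl
  · left
    have hp := List.prefix_iff_eq_take.mp h
    rw [List.take_append, Nat.sub_eq_zero_of_le hl] at hp
    simp at hp
    rw [hp]
    exact List.take_prefix _ _
  · right
    refine ⟨B.take (p.length - A.length), List.take_prefix _ _, ?_⟩
    have hp := List.prefix_iff_eq_take.mp h
    rw [List.take_append, List.take_of_length_le hl.le] at hp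
    exact hp

lemma prefix_of_prefix_append {p A B : List Bool} (h : p <+: A ++ B)
    (hl : p.length ≤ A.length) : p <+: A := by
  rcases prefix_append_cases h with h' | ⟨q, hq, rfl⟩
  · exact h'
  · simp at hl
    subst hl
    simp

/-- Case analysis for prefixes of a tunnel-shaped word. -/
lemma prefix_tunnel_cases {p A B C : List Bool}
    (h : p <+: A ++ true :: (B ++ false :: C)) :
    p <+: A ∨ (∃ q, q <+: B ∧ p = A ++ true :: q) ∨
      (∃ r, r <+: C ∧ p = A ++ true :: (B ++ false :: r)) := by
  rcases prefix_append_cases h with h1 | ⟨q, hq, rfl⟩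
  · exact Or.inl h1
  · rcases q with _ | ⟨a, q⟩
    · left; simp
    · rw [List.cons_prefix_cons] at hq
      obtain ⟨rfl, hq⟩ := hq
      rcases prefix_append_cases hq with h2 | ⟨r, hr, rfl⟩
      · exact Or.inr (Or.inl ⟨q, h2, rfl⟩)
      · rcases r with _ | ⟨b, r⟩
        · exact Or.inr (Or.inl ⟨B, List.prefix_rfl, by simp⟩)
        · rw [List.cons_prefix_cons] at hr
          obtain ⟨rfl, hr⟩ := hr
          exact Or.inr (Or.inr ⟨r, hr, rfl⟩)

/-- Inserting a tunnel into a Dyck word keeps it Dyck. -/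
lemma dyck_insert {A B C : List Bool} (hAC : IsDyckWord (A ++ C)) (hB : IsDyckWord B) :
    IsDyckWord (A ++ true :: (B ++ false :: C)) := by
  obtain ⟨hAC1, hAC2⟩ := hAC
  obtain ⟨hB1, hB2⟩ := hB
  constructor
  · simp [List.count_append, List.count_cons] at *
    omega
  · intro p hp
    rcases prefix_tunnel_cases hp with h1 | ⟨q, hq, rfl⟩ | ⟨r, hr, rfl⟩
    · exact hAC2 p (h1.trans (List.prefix_append _ _))
    · have := hB2 q hq
      have := hAC2 A (List.prefix_append _ _)
      simp [List.count_append, List.count_cons]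
      omega
    · have := hAC2 (A ++ r) (by
        obtain ⟨s, hs⟩ := hr
        exact ⟨s, by rw [← hs, List.append_assoc]⟩)
      simp [List.count_append, List.count_cons] at *
      omega

/-- Removing a tunnel from a Dyck word keeps it Dyck. -/
lemma dyck_remove {A B C : List Bool} (hw : IsDyckWord (A ++ true :: (B ++ false :: C)))
    (hB : IsDyckWord B) : IsDyckWord (A ++ C) := by
  obtain ⟨hw1, hw2⟩ := hw
  obtain ⟨hB1, hB2⟩ := hB
  constructor
  · simp [List.count_append, List.count_cons] at *
    omega
  · intro p hp
    rcases prefix_append_cases hp with h1 | ⟨r, hr, rfl⟩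
    · exact hw2 p (h1.trans (List.prefix_append _ _))
    · have := hw2 (A ++ true :: (B ++ false :: r)) (by
        obtain ⟨s, hs⟩ := hr
        refine ⟨s, ?_⟩
        rw [← hs]
        simp
      )
      simp [List.count_append, List.count_cons] at *
      omega

lemma dyck_body_unique_aux {B₁ C₁ B₂ C₂ : List Bool}
    (h : B₁ ++ false :: C₁ = B₂ ++ false :: C₂)
    (h1 : IsDyckWord B₁) (h2 : IsDyckWord B₂) (hle : B₁.length ≤ B₂.length) :
    B₁ = B₂ := by
  rcases eq_or_lt_of_le hle with heq | hlt
  · exact (List.append_inj h heq).1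
  · exfalso
    have hpre : B₁ ++ [false] <+: B₂ := by
      apply prefix_of_prefix_append (B := false :: C₂)
      · rw [← h]
        refine ⟨C₁, by simp⟩
      · simp; omega
    have hc := h2.2 _ hpre
    have hb := h1.1
    simp [List.count_append] at hc
    omega

lemma tunnel_body_unique {B₁ C₁ B₂ C₂ : List Bool}
    (h : B₁ ++ false :: C₁ = B₂ ++ false :: C₂)
    (h1 : IsDyckWord B₁) (h2 : IsDyckWord B₂) : B₁ = B₂ ∧ C₁ = C₂ := by
  have hB : B₁ = B₂ := by
    rcases le_total B₁.length B₂.length with hle | hle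
    · exact dyck_body_unique_aux h h1 h2 hle
    · exact (dyck_body_unique_aux h.symm h2 h1 hle).symm
  subst hB
  refine ⟨rfl, ?_⟩
  have := List.append_cancel_left h
  exact List.tail_eq_of_cons_eq this

lemma tunnel_unique {w A B₁ C₁ B₂ C₂ : List Bool}
    (h1 : IsTunnel w A B₁ C₁) (h2 : IsTunnel w A B₂ C₂) : B₁ = B₂ ∧ C₁ = C₂ := by
  obtain ⟨e1, d1⟩ := h1
  obtain ⟨e2, d2⟩ := h2
  rw [e1] at e2
  have := List.append_cancel_left e2
  have := List.tail_eq_of_cons_eq this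
  exact tunnel_body_unique this d1 d2

lemma tunnel_A_take {w A B C : List Bool} (h : IsTunnel w A B C) :
    A = w.take A.length := by
  rw [h.1, List.take_append]
  simp

/-- Key list surgery: a lower tunnel around a marked centered tunnel. -/
lemma decomp {A B C A' B' C' : List Bool}
    (h : A ++ true :: (B ++ false :: C) = A' ++ true :: (B' ++ false :: C'))
    (hA : A'.length < A.length) (hC : C'.length < C.length) :
    ∃ X Y, A = A' ++ true :: X ∧ C = Y ++ false :: C' ∧
      B' = X ++ true :: (B ++ false :: Y) := by
  -- step 1 : A = A' ++ true :: X
  have hAsplit : ∃ X, A = A' ++ true :: X := by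
    have hApre : A' ++ [true] <+: A := by
      apply prefix_of_prefix_append (B := true :: (B ++ false :: C))
      · rw [h]
        refine ⟨B' ++ false :: C', by simp⟩
      · simp; omega
    obtain ⟨s, hs⟩ := hApre
    exact ⟨s, by rw [← hs]; simp⟩
  obtain ⟨X, hX⟩ := hAsplit
  -- step 2 : split C
  set m := C.length - 1 - C'.length with hm
  have hCsplit : C = C.take m ++ C.drop m := (List.take_append_drop m C).symm
  have hlen2 : (C.drop m).length = C'.length + 1 := by
    simp [hm]; omega
  have h2 : (X ++ true :: (B ++ false :: C.take m)) ++ C.drop m = B' ++ false :: C' := by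
    have : A ++ true :: (B ++ false :: C) =
        A' ++ true :: ((X ++ true :: (B ++ false :: C.take m)) ++ C.drop m) := by
      rw [hX]
      nth_rewrite 2 [hCsplit]
      simp
    rw [this] at h
    have := List.append_cancel_left h
    exact List.tail_eq_of_cons_eq this
  have h3 := List.append_inj' h2 (by simp [hlen2])
  refine ⟨X, C.take m, hX, ?_, h3.1.symm⟩
  rw [← h3.2]
  exact hCsplit

/-- Surgery in the other direction: a centered tunnel of `A ++ C`. -/
lemma decomp2 {A C A' B' C' : List Bool}
    (h : A ++ C = A' ++ true :: (B' ++ false :: C'))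
    (hA : A'.length < A.length) (hC : C'.length < C.length) :
    ∃ X Y, A = A' ++ true :: X ∧ C = Y ++ false :: C' ∧ B' = X ++ Y := by
  have hAsplit : ∃ X, A = A' ++ true :: X := by
    have hApre : A' ++ [true] <+: A := by
      apply prefix_of_prefix_append (B := C)
      · rw [h]
        refine ⟨B' ++ false :: C', by simp⟩
      · simp; omega
    obtain ⟨s, hs⟩ := hApre
    exact ⟨s, by rw [← hs]; simp⟩
  obtain ⟨X, hX⟩ := hAsplit
  set m := C.length - 1 - C'.length with hm
  have hCsplit : C = C.take m ++ C.drop m := (List.take_append_drop m C).symm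
  have hlen2 : (C.drop m).length = C'.length + 1 := by
    simp [hm]; omega
  have h2 : (X ++ C.take m) ++ C.drop m = B' ++ false :: C' := by
    have heq : A ++ C = A' ++ true :: ((X ++ C.take m) ++ C.drop m) := by
      rw [hX]
      nth_rewrite 1 [hCsplit]
      simp
    rw [heq] at h
    have := List.append_cancel_left h
    exact List.tail_eq_of_cons_eq this
  have h3 := List.append_inj' h2 (by simp [hlen2])
  refine ⟨X, C.take m, hX, ?_, h3.1.symm⟩
  rw [← h3.2]
  exact hCsplit

/-- A centered tunnel of `A ++ C` transfers to a centered tunnel of `A u B d C`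
    with strictly smaller left part. -/
lemma transfer_up {A B C A' B' C' : List Bool} (hB : IsDyckWord B)
    (hlen : A.length = C.length)
    (hE : IsTunnel (A ++ C) A' B' C') (hcent : A'.length = C'.length) :
    ∃ B₂, IsTunnel (A ++ true :: (B ++ false :: C)) A' B₂ C' ∧ A'.length < A.length := by
  obtain ⟨he, hd⟩ := hE
  have hlens : A.length + C.length = A'.length + (B'.length + C'.length + 2) := by
    have := congrArg List.length he
    simp at this
    omega
  have hA : A'.length < A.length := by omega
  have hC : C'.length < C.length := by omega
  obtain ⟨X, Y, hX, hY, hB'⟩ := decomp2 he hA hC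
  refine ⟨X ++ true :: (B ++ false :: Y), ⟨?_, ?_⟩, hA⟩
  · rw [hX, hY]
    simp
  · exact dyck_insert (by rw [← hB']; exact hd) hB

/-- A centered tunnel of `A u B d C` strictly left of the marked one transfers
    to a centered tunnel of `A ++ C`. -/
lemma transfer_down {A B C A' B'' C'' : List Bool} (hB : IsDyckWord B)
    (hlen : A.length = C.length)
    (hT : IsTunnel (A ++ true :: (B ++ false :: C)) A' B'' C'')
    (hc : A'.length = C''.length) (hlt : A'.length < A.length) :
    ∃ B', IsTunnel (A ++ C) A' B' C'' := by
  obtain ⟨he, hd⟩ := hT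
  have hC : C''.length < C.length := by omega
  obtain ⟨X, Y, hX, hY, hB''⟩ := decomp he hlt hC
  refine ⟨X ++ Y, ?_, ?_⟩
  · rw [hX, hY]
    simp
  · exact dyck_remove (by rw [← hB'']; exact hd) hB

lemma tunnel_A_length_le {w A B C : List Bool} (h : IsTunnel w A B C) :
    A.length ≤ w.length := by
  have := congrArg List.length h.1
  simp at this
  omega

lemma tunnel_ext {w : List Bool} {T₁ T₂ : List Bool × List Bool × List Bool}
    (h1 : IsTunnel w T₁.1 T₁.2.1 T₁.2.2) (h2 : IsTunnel w T₂.1 T₂.2.1 T₂.2.2)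
    (hl : T₁.1.length = T₂.1.length) : T₁ = T₂ := by
  obtain ⟨A₁, B₁, C₁⟩ := T₁
  obtain ⟨A₂, B₂, C₂⟩ := T₂
  simp only at *
  have hA : A₁ = A₂ := by
    rw [tunnel_A_take h1, tunnel_A_take h2, hl]
  subst hA
  obtain ⟨hB, hC⟩ := tunnel_unique h1 h2
  simp [hB, hC]

instance ctr_finite (w : List Bool) : Finite {T : List Bool × List Bool × List Bool //
    IsTunnel w T.1 T.2.1 T.2.2 ∧ T.1.length = T.2.2.length} := by
  apply Finite.of_injective
    (f := fun T => (⟨T.1.1.length, Nat.lt_succ_of_le (tunnel_A_length_le T.2.1)⟩ :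
      Fin (w.length + 1)))
  intro T₁ T₂ h
  simp only [Fin.mk.injEq] at h
  exact Subtype.ext (tunnel_ext T₁.2.1 T₂.2.1 h)

lemma ct_eq_zero_iff {w : List Bool} :
    ct w = 0 ↔ ∀ A B C, IsTunnel w A B C → A.length ≠ C.length := by
  rw [ct, Nat.card_eq_zero]
  constructor
  · rintro (he | hi)
    · intro A B C hT hl
      exact he.false ⟨(A, B, C), hT, hl⟩
    · exact absurd (ctr_finite w) hi.not_finite
  · intro h
    left
    constructor
    rintro ⟨⟨A, B, C⟩, hT, hl⟩
    exact h A B C hT hl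

lemma ct_ne_zero {w A B C : List Bool} (hT : IsTunnel w A B C)
    (hl : A.length = C.length) : ct w ≠ 0 := by
  have : Nonempty {T : List Bool × List Bool × List Bool //
      IsTunnel w T.1 T.2.1 T.2.2 ∧ T.1.length = T.2.2.length} := ⟨⟨(A, B, C), hT, hl⟩⟩
  exact Nat.card_pos.ne'

lemma ct_ne_zero_iff {w : List Bool} :
    ct w ≠ 0 ↔ ∃ A B C, IsTunnel w A B C ∧ A.length = C.length := by
  constructor
  · intro h
    by_contra hc
    push_neg at hc
    exact h (ct_eq_zero_iff.mpr fun A B C hT => hc A B C hT)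
  · rintro ⟨A, B, C, hT, hl⟩
    exact ct_ne_zero hT hl

/-- Insert a tunnel `u B d` at the midpoint of `E`. -/
def mkw (k : ℕ) (E B : List Bool) : List Bool :=
  E.take k ++ true :: (B ++ false :: E.drop k)

lemma mkw_take_len {k : ℕ} {E : List Bool} (hE : E.length = 2 * k) :
    (E.take k).length = k := by simp; omega

lemma mkw_drop_len {k : ℕ} {E : List Bool} (hE : E.length = 2 * k) :
    (E.drop k).length = k := by simp; omega

lemma mkw_tunnel {k : ℕ} {E B : List Bool} (hB : IsDyckWord B) :
    IsTunnel (mkw k E B) (E.take k) B (E.drop k) := ⟨rfl, hB⟩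

lemma mkw_dyck {k : ℕ} {E B : List Bool} (hE : IsDyckWord E) (hB : IsDyckWord B) :
    IsDyckWord (mkw k E B) :=
  dyck_insert (by rw [List.take_append_drop]; exact hE) hB

lemma mkw_length {k : ℕ} {E B : List Bool} (hE : E.length = 2 * k) :
    (mkw k E B).length = E.length + B.length + 2 := by
  simp [mkw]; omega

/-- If `ct E = 0`, the inserted tunnel is the lowest centered tunnel of `mkw k E B`. -/
lemma mkw_min {k : ℕ} {E B : List Bool} (hB : IsDyckWord B) (hE : E.length = 2 * k)
    (hctE : ct E = 0) {A' B' C' : List Bool} (hT : IsTunnel (mkw k E B) A' B' C')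
    (hc : A'.length = C'.length) : ¬ A'.length < k := by
  intro hlt
  obtain ⟨B₀, hT₀⟩ := transfer_down hB
    ((mkw_take_len hE).trans (mkw_drop_len hE).symm) hT hc
    (by rw [mkw_take_len hE]; exact hlt)
  rw [List.take_append_drop] at hT₀
  exact ct_eq_zero_iff.mp hctE A' B₀ C' hT₀ hc

/-- If `ct E = 0`, `mkw k E B` has its lowest centered tunnel exactly at `k`. -/
lemma mkw_pos_min {k : ℕ} {E B : List Bool} (hB : IsDyckWord B) (hE : E.length = 2 * k)
    (hctE : ct E = 0) {A' B' C' : List Bool} (hT : IsTunnel (mkw k E B) A' B' C')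
    (hc : A'.length = C'.length) (hmin : ∀ A₂ B₂ C₂, IsTunnel (mkw k E B) A₂ B₂ C₂ →
      A₂.length = C₂.length → ¬ A₂.length < A'.length) : A'.length = k := by
  rcases lt_trichotomy A'.length k with h | h | h
  · exact absurd h (mkw_min hB hE hctE hT hc)
  · exact h
  · refine absurd ?_ (hmin _ _ _ (mkw_tunnel hB)
      ((mkw_take_len hE).trans (mkw_drop_len hE).symm))
    rw [mkw_take_len hE]
    exact h

open DyckStep in
/-- Booleans to Dyck steps. -/
def toDS (b : Bool) : DyckStep := if b then U else D

open DyckStep in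
/-- Dyck steps to booleans. -/
def ofDS (s : DyckStep) : Bool := match s with | U => true | D => false

lemma toDS_inj : Function.Injective toDS := by
  intro a b h
  cases a <;> cases b <;> simp [toDS] at h ⊢

lemma ofDS_inj : Function.Injective ofDS := by
  intro a b h
  cases a <;> cases b <;> simp [ofDS] at h ⊢

lemma ofDS_toDS : ofDS ∘ toDS = id := by
  funext b; cases b <;> rfl

lemma toDS_ofDS : toDS ∘ ofDS = id := by
  funext s; cases s <;> rfl

open DyckStep in
/-- The equivalence between Bool-encoded Dyck words of length `2n` and mathlib's
Dyck words of semilength `n`. -/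
noncomputable def dyckEquiv (n : ℕ) :
    {w : List Bool // IsDyckWord w ∧ w.length = 2 * n} ≃
      {p : DyckWord // p.semilength = n} where
  toFun w := ⟨⟨w.1.map toDS, by
      have := w.2.1.1
      rw [show U = toDS true from rfl, show D = toDS false from rfl,
        List.count_map_of_injective _ _ toDS_inj, List.count_map_of_injective _ _ toDS_inj]
      exact this, by
      intro i
      rw [show U = toDS true from rfl, show D = toDS false from rfl, ← List.map_take,
        List.count_map_of_injective _ _ toDS_inj, List.count_map_of_injective _ _ toDS_inj]
      exact w.2.1.2 _ (List.take_prefix _ _)⟩, by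
      have h1 := w.2.1.1
      have h2 := count_tf w.1
      have h3 := w.2.2
      have h4 : List.count U (List.map toDS (w.1)) = List.count true w.1 :=
        List.count_map_of_injective _ _ toDS_inj true
      show List.count U (List.map toDS (w.1)) = n
      omega⟩
  invFun p := ⟨p.1.toList.map ofDS, ⟨by
      have := p.1.count_U_eq_count_D
      rw [show true = ofDS U from rfl, show false = ofDS D from rfl,
        List.count_map_of_injective _ _ ofDS_inj, List.count_map_of_injective _ _ ofDS_inj]
      exact this, by
      intro q hq
      rw [List.prefix_iff_eq_take] at hq
      rw [hq, ← List.map_take, show true = ofDS U from rfl, show false = ofDS D from rfl,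
        List.count_map_of_injective _ _ ofDS_inj, List.count_map_of_injective _ _ ofDS_inj]
      exact p.1.count_D_le_count_U _⟩, by
      have := p.1.two_mul_semilength_eq_length
      have h2 := p.2
      simp only [List.length_map]
      omega⟩
  left_inv w := by
    apply Subtype.ext
    simp [List.map_map, ofDS_toDS]
  right_inv p := by
    apply Subtype.ext
    apply DyckWord.ext
    simp [List.map_map, toDS_ofDS]

instance S_finite (n : ℕ) : Finite {w : List Bool // IsDyckWord w ∧ w.length = 2 * n} :=
  Finite.of_equiv _ (dyckEquiv n).symm

lemma card_S (n : ℕ) :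
    Nat.card {w : List Bool // IsDyckWord w ∧ w.length = 2 * n} = catalan n := by
  rw [Nat.card_congr (dyckEquiv n), Nat.card_eq_fintype_card,
    DyckWord.card_dyckWord_semilength_eq_catalan]

instance Z_finite (n : ℕ) :
    Finite {w : List Bool // IsDyckWord w ∧ w.length = 2 * n ∧ ct w = 0} := by
  apply Finite.of_injective (f := fun w =>
    (⟨w.1, w.2.1, w.2.2.1⟩ : {w : List Bool // IsDyckWord w ∧ w.length = 2 * n}))
  intro a b h
  exact Subtype.ext (by simpa using congrArg Subtype.val h)

instance NZ_finite (n : ℕ) :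
    Finite {w : List Bool // IsDyckWord w ∧ w.length = 2 * n ∧ ct w ≠ 0} := by
  apply Finite.of_injective (f := fun w =>
    (⟨w.1, w.2.1, w.2.2.1⟩ : {w : List Bool // IsDyckWord w ∧ w.length = 2 * n}))
  intro a b h
  exact Subtype.ext (by simpa using congrArg Subtype.val h)

lemma dyck_len_even {B : List Bool} (hB : IsDyckWord B) : B.length = 2 * B.count true := by
  have := count_tf B
  have := hB.1
  omega

/-- The lowest-centered-tunnel decomposition map. -/
def Phi (n : ℕ) (x : Σ k : Fin n,
    {E : List Bool // IsDyckWord E ∧ E.length = 2 * (k : ℕ) ∧ ct E = 0} ×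
    {B : List Bool // IsDyckWord B ∧ B.length = 2 * (n - 1 - (k : ℕ))}) :
    {w : List Bool // IsDyckWord w ∧ w.length = 2 * n ∧ ct w ≠ 0} :=
  ⟨mkw x.1 x.2.1.1 x.2.2.1, mkw_dyck x.2.1.2.1 x.2.2.2.1, by
    have h1 := mkw_length (B := x.2.2.1) x.2.1.2.2.1
    have h2 := x.2.1.2.2.1
    have h3 := x.2.2.2.2
    have h4 := x.1.2
    omega, by
    exact ct_ne_zero (mkw_tunnel x.2.2.2.1)
      ((mkw_take_len x.2.1.2.2.1).trans (mkw_drop_len x.2.1.2.2.1).symm)⟩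

lemma Phi_bijective (n : ℕ) : Function.Bijective (Phi n) := by
  constructor
  · rintro ⟨⟨k₁, hk₁⟩, ⟨E₁, hd₁, hl₁, hc₁⟩, ⟨B₁, hBd₁, hBl₁⟩⟩
      ⟨⟨k₂, hk₂⟩, ⟨E₂, hd₂, hl₂, hc₂⟩, ⟨B₂, hBd₂, hBl₂⟩⟩ h
    have hw : mkw k₁ E₁ B₁ = mkw k₂ E₂ B₂ := congrArg Subtype.val h
    -- the two inserted tunnels, as tunnels of the same word
    have hT₁ : IsTunnel (mkw k₁ E₁ B₁) (E₁.take k₁) B₁ (E₁.drop k₁) := mkw_tunnel hBd₁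
    have hT₂ : IsTunnel (mkw k₁ E₁ B₁) (E₂.take k₂) B₂ (E₂.drop k₂) := by
      rw [hw]; exact mkw_tunnel hBd₂
    have hcen₁ : (E₁.take k₁).length = (E₁.drop k₁).length :=
      (mkw_take_len hl₁).trans (mkw_drop_len hl₁).symm
    have hcen₂ : (E₂.take k₂).length = (E₂.drop k₂).length :=
      (mkw_take_len hl₂).trans (mkw_drop_len hl₂).symm
    have hkk : k₁ = k₂ := by
      rcases lt_trichotomy k₁ k₂ with hlt | heq | hlt
      · exfalso
        apply mkw_min hBd₂ hl₂ hc₂ (hw ▸ hT₁) hcen₁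
        rw [mkw_take_len hl₁]; exact hlt
      · exact heq
      · exfalso
        apply mkw_min hBd₁ hl₁ hc₁ hT₂ hcen₂
        rw [mkw_take_len hl₂]; exact hlt
    subst hkk
    have htrip := tunnel_ext (T₁ := (E₁.take k₁, B₁, E₁.drop k₁))
      (T₂ := (E₂.take k₁, B₂, E₂.drop k₁)) hT₁ hT₂
      (by simp only; rw [mkw_take_len hl₁, mkw_take_len hl₂])
    simp only [Prod.mk.injEq] at htrip
    obtain ⟨ht, hb, hdr⟩ := htrip
    have hE : E₁ = E₂ := by
      rw [← List.take_append_drop k₁ E₁, ← List.take_append_drop k₁ E₂, ht, hdr]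
    subst hE
    subst hb
    rfl
  · rintro ⟨w, hD, hlen, hct⟩
    classical
    obtain ⟨A₀, B₀, C₀, hT₀, hc₀⟩ := ct_ne_zero_iff.mp hct
    have hex : ∃ j, ∃ A B C, IsTunnel w A B C ∧ A.length = C.length ∧ A.length = j :=
      ⟨A₀.length, A₀, B₀, C₀, hT₀, hc₀, rfl⟩
    obtain ⟨A, B, C, hT, hc, hj⟩ := Nat.find_spec hex
    set j₀ := Nat.find hex with hj₀
    have hwl : w.length = A.length + B.length + C.length + 2 := by
      have := congrArg List.length hT.1
      simp at this
      omega
    have hBev := dyck_len_even hT.2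
    have hk : A.length < n := by omega
    have hE : IsDyckWord (A ++ C) := dyck_remove (hT.1 ▸ hD) hT.2
    have hElen : (A ++ C).length = 2 * A.length := by simp; omega
    have hctE : ct (A ++ C) = 0 := by
      by_contra hne
      obtain ⟨A', B', C', hT', hc'⟩ := ct_ne_zero_iff.mp hne
      obtain ⟨B₂, hT₂, hlt⟩ := transfer_up hT.2 hc hT' hc'
      rw [← hT.1] at hT₂
      exact Nat.find_min hex (m := A'.length) (by omega) ⟨A', B₂, C', hT₂, hc', rfl⟩
    refine ⟨⟨⟨A.length, hk⟩, ⟨A ++ C, hE, hElen, hctE⟩, ⟨B, hT.2, by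
      show B.length = 2 * (n - 1 - A.length)
      omega⟩⟩, ?_⟩
    apply Subtype.ext
    show mkw A.length (A ++ C) B = w
    rw [mkw, List.take_left, List.drop_left, hT.1]

lemma card_NZ (n : ℕ) :
    Nat.card {w : List Bool // IsDyckWord w ∧ w.length = 2 * n ∧ ct w ≠ 0} =
      ∑ k ∈ Finset.range n,
        Nat.card {w : List Bool // IsDyckWord w ∧ w.length = 2 * k ∧ ct w = 0} *
          catalan (n - 1 - k) := by
  rw [← Nat.card_eq_of_bijective _ (Phi_bijective n)]
  haveI : ∀ k : Fin n, Fintype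
      ({E : List Bool // IsDyckWord E ∧ E.length = 2 * (k : ℕ) ∧ ct E = 0} ×
       {B : List Bool // IsDyckWord B ∧ B.length = 2 * (n - 1 - (k : ℕ))}) :=
    fun k => Fintype.ofFinite _
  rw [Nat.card_eq_fintype_card, Fintype.card_sigma,
    ← Fin.sum_univ_eq_sum_range (fun k =>
      Nat.card {w : List Bool // IsDyckWord w ∧ w.length = 2 * k ∧ ct w = 0} *
        catalan (n - 1 - k)) n]
  apply Finset.sum_congr rfl
  intro k _
  rw [← Nat.card_eq_fintype_card, Nat.card_prod, card_S]

lemma card_split (n : ℕ) :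
    Nat.card {w : List Bool // IsDyckWord w ∧ w.length = 2 * n} =
    Nat.card {w : List Bool // IsDyckWord w ∧ w.length = 2 * n ∧ ct w = 0} +
    Nat.card {w : List Bool // IsDyckWord w ∧ w.length = 2 * n ∧ ct w ≠ 0} := by
  classical
  rw [Nat.card_congr (Equiv.sumCompl
    (fun x : {w : List Bool // IsDyckWord w ∧ w.length = 2 * n} => ct x.1 = 0)).symm,
    Nat.card_sum]
  congr 1
  · exact Nat.card_congr ⟨fun x => ⟨x.1.1, x.1.2.1, x.1.2.2, x.2⟩,
      fun w => ⟨⟨w.1, w.2.1, w.2.2.1⟩, w.2.2.2⟩, fun x => rfl, fun w => rfl⟩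
  · exact Nat.card_congr ⟨fun x => ⟨x.1.1, x.1.2.1, x.1.2.2, x.2⟩,
      fun w => ⟨⟨w.1, w.2.1, w.2.2.1⟩, w.2.2.2⟩, fun x => rfl, fun w => rfl⟩

/-- The key combinatorial recursion. -/
lemma key_rec (n : ℕ) : catalan n =
    Nat.card {w : List Bool // IsDyckWord w ∧ w.length = 2 * n ∧ ct w = 0} +
    ∑ k ∈ Finset.range n,
      Nat.card {w : List Bool // IsDyckWord w ∧ w.length = 2 * k ∧ ct w = 0} *
        catalan (n - 1 - k) := by
  rw [← card_S n, card_split n, card_NZ n]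

lemma catalan_conv (m : ℕ) :
    (catalan (m + 1) : ℤ) =
      ∑ k ∈ Finset.range m, (catalan (k + 1) : ℤ) * catalan (m - (k + 1)) + catalan m := by
  have h : (catalan (m + 1) : ℤ) = ∑ k ∈ Finset.range (m + 1), (catalan k : ℤ) * catalan (m - k) := by
    rw [catalan_succ m]
    push_cast [← Fin.sum_univ_eq_sum_range (fun k => (catalan k : ℤ) * catalan (m - k)) (m + 1)]
    rfl
  rw [h, Finset.sum_range_succ' (fun k => (catalan k : ℤ) * catalan (m - k)) m]
  simp [catalan_zero]

lemma fine_conv (G : ℕ → ℕ) (hG0 : G 0 = 1)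
    (hR : ∀ m : ℕ, 1 ≤ m → (catalan m : ℤ) = 2 * G m + G (m - 1)) :
    ∀ m, catalan m = G m + ∑ k ∈ Finset.range m, G k * catalan (m - 1 - k) := by
  have hQ : ∀ m : ℕ, 1 ≤ m →
      (∑ k ∈ Finset.range m, (G k : ℤ) * catalan (m - 1 - k)) = G m + G (m - 1) := by
    intro m hm
    induction m, hm using Nat.le_induction with
    | base =>
      have h1 := hR 1 le_rfl
      simp [catalan_one] at h1
      simp [hG0]
      omega
    | succ m hm ih =>
      have hidx : ∀ k, m + 1 - 1 - k = m - k := by intro k; omega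
      simp only [hidx]
      rw [Finset.sum_range_succ' (fun k => (G k : ℤ) * catalan (m - k)) m]
      set L : ℤ := ∑ k ∈ Finset.range m, (G (k + 1) : ℤ) * catalan (m - (k + 1)) with hL
      have h2L : 2 * L = (catalan (m + 1) : ℤ) - catalan m - (G m + G (m - 1)) := by
        have e1 : 2 * L = ∑ k ∈ Finset.range m,
            (((catalan (k + 1) : ℤ)) - G k) * catalan (m - (k + 1)) := by
          rw [hL, Finset.mul_sum]
          apply Finset.sum_congr rfl
          intro k _
          have := hR (k + 1) (by omega)
          simp only [Nat.add_sub_cancel] at this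
          rw [this]
          ring
        rw [e1]
        simp only [sub_mul, Finset.sum_sub_distrib]
        have e2 : ∑ k ∈ Finset.range m, (catalan (k + 1) : ℤ) * catalan (m - (k + 1)) =
            (catalan (m + 1) : ℤ) - catalan m := by
          have := catalan_conv m
          linarith
        have e3 : ∑ k ∈ Finset.range m, (G k : ℤ) * catalan (m - (k + 1)) =
            (G m : ℤ) + G (m - 1) := by
          rw [← ih]
          apply Finset.sum_congr rfl
          intro k _
          have he : m - (k + 1) = m - 1 - k := by omega
          rw [he]
        rw [e2, e3]
      have h4 := hR m hm
      have h5 := hR (m + 1) (by omega)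
      simp only [Nat.add_sub_cancel] at h5
      simp only [Nat.sub_zero, hG0, catalan_zero]
      push_cast
      linarith
  intro m
  rcases Nat.eq_zero_or_pos m with rfl | hm
  · simp [hG0]
  · have h1 := hQ m hm
    have h2 := hR m hm
    have h3 : ((∑ k ∈ Finset.range m, G k * catalan (m - 1 - k) : ℕ) : ℤ) =
        ∑ k ∈ Finset.range m, (G k : ℤ) * catalan (m - 1 - k) := by
      push_cast
      rfl
    have : (catalan m : ℤ) = G m + ((∑ k ∈ Finset.range m, G k * catalan (m - 1 - k) : ℕ) : ℤ) := by
      rw [h3, h1]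
      linarith
    exact_mod_cast this

/-- The number of Dyck paths of semilength `n` with no centered tunnel is the Fine
number `F n`, where `F 1 = 0`, `F 2 = 1` and `catalan n = 2 * F n + F (n-1)` for `n ≥ 2`. -/
theorem stmt16 (F : ℕ → ℕ) (hF1 : F 1 = 0) (hF2 : F 2 = 1)
    (hFrec : ∀ m : ℕ, 2 ≤ m → catalan m = 2 * F m + F (m - 1))
    (n : ℕ) (hn : 1 ≤ n) :
    Nat.card {w : List Bool // IsDyckWord w ∧ w.length = 2 * n ∧ ct w = 0} = F n := by
  set G : ℕ → ℕ := fun m => if m = 0 then 1 else F m with hG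
  have hG0 : G 0 = 1 := rfl
  have hR : ∀ m : ℕ, 1 ≤ m → (catalan m : ℤ) = 2 * G m + G (m - 1) := by
    intro m hm
    rcases eq_or_lt_of_le hm with h1 | h2
    · simp [hG, ← h1, catalan_one, hF1]
    · have h2' : (2 : ℕ) ≤ m := h2
      have hr := hFrec m h2'
      have hm0 : ¬ m = 0 := by omega
      have hm1 : ¬ m - 1 = 0 := by omega
      simp only [hG, if_neg hm0, if_neg hm1]
      exact_mod_cast hr
  have hkeyF := fine_conv G hG0 hR
  have hmain : ∀ m, Nat.card {w : List Bool // IsDyckWord w ∧ w.length = 2 * m ∧ ct w = 0} = G m := by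
    intro m
    induction m using Nat.strong_induction_on with
    | _ m ih =>
      have h1 := key_rec m
      have h2 := hkeyF m
      have hs : ∑ k ∈ Finset.range m,
          Nat.card {w : List Bool // IsDyckWord w ∧ w.length = 2 * k ∧ ct w = 0} *
            catalan (m - 1 - k) =
          ∑ k ∈ Finset.range m, G k * catalan (m - 1 - k) :=
        Finset.sum_congr rfl (fun k hk => by rw [ih k (Finset.mem_range.mp hk)])
      rw [hs] at h1
      omega
  have := hmain n
  simp only [hG] at this
  rwa [if_neg (by omega : ¬ n = 0)] at this
end

section
/- If Ψ denotes Krattenthaler's bijection from 132-avoiding permutations to Dyck paths, then Ψ(σ^{-1}) is the reflection of Ψ(σ) across the vertical line x = n; consequently σ is an involution if and only if Ψ(σ) is symmetric under this reflection. -/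
/-- `σ` avoids the pattern 321, i.e. there is no decreasing subsequence of length 3. -/
def Avoids321 {n : ℕ} (σ : Equiv.Perm (Fin n)) : Prop :=
  ¬ ∃ i j k : Fin n, i < j ∧ j < k ∧ σ k < σ j ∧ σ j < σ i

/-- `σ` avoids the pattern 132. -/
def Avoids132 {n : ℕ} (σ : Equiv.Perm (Fin n)) : Prop :=
  ¬ ∃ i j k : Fin n, i < j ∧ j < k ∧ σ i < σ k ∧ σ k < σ j

/-- The number of fixed points of `σ`. -/
def fp {n : ℕ} (σ : Equiv.Perm (Fin n)) : ℕ :=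
  (Finset.univ.filter fun i => σ i = i).card

/-- The number of excedances of `σ`. -/
def exc {n : ℕ} (σ : Equiv.Perm (Fin n)) : ℕ :=
  (Finset.univ.filter fun i => i < σ i).card

/-- The length of the longest increasing subsequence of `σ`. -/
noncomputable def lis {n : ℕ} (σ : Equiv.Perm (Fin n)) : ℕ :=
  sSup {k | ∃ f : Fin k → Fin n, StrictMono f ∧ StrictMono (σ ∘ f)}

/-- The rank of `σ` : the largest `k` such that (in one-line, 0-indexed notation)
`σ i ≥ k` for all `i < k`. -/
noncomputable def rk {n : ℕ} (σ : Equiv.Perm (Fin n)) : ℕ :=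
  sSup {k | ∀ i : Fin n, (i : ℕ) < k → k ≤ (σ i : ℕ)}

/-- The value `σ i` as a natural number, extended by `n` outside the domain. -/
def valAt {n : ℕ} (σ : Equiv.Perm (Fin n)) (i : ℕ) : ℕ :=
  if h : i < n then (σ ⟨i, h⟩ : ℕ) else n

/-- `min (σ 0, …, σ (r-1))`, with the convention `minUpTo σ 0 = n`. -/
def minUpTo {n : ℕ} (σ : Equiv.Perm (Fin n)) (r : ℕ) : ℕ :=
  (List.range r).foldr (fun i m => min (valAt σ i) m) n

/-- Krattenthaler's bijection `Ψ` from 132-avoiding permutations to Dyck words: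
the Dyck path tracing the border of the diagram of `σ`, read from the lower-left
corner (bottom row) to the upper-right corner: going up through row `r` contributes
an up-step, and the right-steps between consecutive rows are governed by the border
of the diagram, whose row `r` has length `minUpTo σ (r+1)`. -/
def psi {n : ℕ} (σ : Equiv.Perm (Fin n)) : List Bool :=
  (List.range n).flatMap fun k =>
    true :: List.replicate (minUpTo σ (n - 1 - k) - minUpTo σ (n - k)) false

/-!
Write `m_σ r = min (σ 0, …, σ (r - 1))` (`minUpTo`). The `k`-th up-step of `Ψ σ` sits at
position `k + m_σ (n - k)`, so `Ψ σ` is the 0/1 word of length `2n` with these `n` up-steps,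
and the reflection of `Ψ σ` is the word whose up-steps are the complement of the mirrored
positions `2n - 1 - (k + m_σ (n - k))`. The rectangle `[0, j) × [0, k)` meets the graph of
`σ` iff its transpose meets the graph of `σ⁻¹`, i.e. `m_σ j < k ↔ m_{σ⁻¹} k < j`; this rules
out `m_σ j + m_{σ⁻¹} k + 1 = j + k`, which is exactly a collision between an up-step of
`Ψ σ⁻¹` and a mirrored up-step of `Ψ σ`. Both sets have `n` elements in `[0, 2n)`, so they
are complementary and `Ψ σ⁻¹` is the reflection of `Ψ σ`.

For the involution criterion it remains that `Ψ` is injective on 132-avoiding permutations: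
the up-step positions recover the prefix minima, and a 132-avoiding permutation is
determined by its prefix minima.
-/

lemma List.le_foldr_min_iff {α : Type*} (g : α → ℕ) (l : List α) (b v : ℕ) :
    v ≤ l.foldr (fun i m => min (g i) m) b ↔ v ≤ b ∧ ∀ i ∈ l, v ≤ g i := by
  induction l with
  | nil => simp
  | cons a l ih => simp only [List.foldr_cons, le_min_iff, ih, List.forall_mem_cons]; tauto

section minUpTo

variable {n : ℕ} (σ : Equiv.Perm (Fin n))

lemma le_minUpTo_iff {r v : ℕ} : v ≤ minUpTo σ r ↔ v ≤ n ∧ ∀ i < r, v ≤ valAt σ i := by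
  simp [minUpTo, List.le_foldr_min_iff]

lemma minUpTo_le (r : ℕ) : minUpTo σ r ≤ n :=
  ((le_minUpTo_iff σ).1 le_rfl).1

lemma minUpTo_antitone : Antitone (minUpTo σ) := fun _ s hrs =>
  have h := (le_minUpTo_iff σ).1 (le_refl (minUpTo σ s))
  (le_minUpTo_iff σ).2 ⟨h.1, fun i hi => h.2 i (hi.trans_le hrs)⟩

lemma minUpTo_zero : minUpTo σ 0 = n := rfl

lemma minUpTo_lt_iff {r v : ℕ} (hv : v ≤ n) :
    minUpTo σ r < v ↔ ∃ i : Fin n, (i : ℕ) < r ∧ (σ i : ℕ) < v := by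
  rw [← not_le, le_minUpTo_iff]
  simp only [hv, true_and, not_forall, not_le]
  constructor
  · rintro ⟨i, hir, hi⟩
    have hin : i < n := by by_contra h; simp [valAt, h] at hi; omega
    exact ⟨⟨i, hin⟩, hir, by simpa [valAt, hin] using hi⟩
  · rintro ⟨i, hir, hi⟩
    exact ⟨i, hir, by simpa [valAt, i.2] using hi⟩

lemma minUpTo_le_apply {r : ℕ} {i : Fin n} (hi : (i : ℕ) < r) : minUpTo σ r ≤ σ i := by
  have := (minUpTo_lt_iff σ (v := σ i + 1) (σ i).2).2 ⟨i, hi, Nat.lt_succ_self _⟩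
  omega

lemma minUpTo_n : minUpTo σ n = 0 := by
  rcases n with _ | n
  · rfl
  · exact Nat.le_zero.1 (by simpa using minUpTo_le_apply σ (σ.symm 0).2)

/-- The graphs of `σ` and `σ⁻¹` are transposed, so both sides say that the rectangle
`[0, j) × [0, k)` meets the graph of `σ`. -/
lemma minUpTo_inv_lt_iff {j k : ℕ} (hj : j ≤ n) (hk : k ≤ n) :
    minUpTo σ⁻¹ k < j ↔ minUpTo σ j < k := by
  rw [minUpTo_lt_iff _ hj, minUpTo_lt_iff _ hk]
  exact ⟨fun ⟨v, hv, hi⟩ => ⟨σ⁻¹ v, hi, by simpa using hv⟩,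
    fun ⟨i, hi, hv⟩ => ⟨σ i, hv, by simpa using hi⟩⟩

lemma minUpTo_add_minUpTo_inv_ne {j k : ℕ} (hj : j ≤ n) (hk : k ≤ n) :
    minUpTo σ j + minUpTo σ⁻¹ k + 1 ≠ j + k := by
  have := minUpTo_inv_lt_iff σ hj hk
  omega

end minUpTo

def wordOfUpSteps (L : ℕ) (S : Finset ℕ) : List Bool :=
  (List.range L).map (· ∈ S)

lemma wordOfUpSteps_inj {L : ℕ} {S T : Finset ℕ} (hS : S ⊆ Finset.range L)
    (hT : T ⊆ Finset.range L) (h : wordOfUpSteps L S = wordOfUpSteps L T) : S = T := by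
  have h' := List.map_inj_left.1 h
  ext p
  by_cases hp : p < L
  · simpa using h' p (List.mem_range.2 hp)
  · exact iff_of_false (fun hpS => hp (by simpa using hS hpS))
      (fun hpT => hp (by simpa using hT hpT))

lemma reverse_map_not_wordOfUpSteps {L : ℕ} {S : Finset ℕ} (hS : S ⊆ Finset.range L) :
    (wordOfUpSteps L S).reverse.map (fun b => !b) =
      wordOfUpSteps L (Finset.range L \ S.image (L - 1 - ·)) := by
  rw [wordOfUpSteps, ← List.map_reverse, List.range_eq_range', List.reverse_range',
    List.map_map, List.map_map, wordOfUpSteps]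
  refine List.map_congr_left fun p hp => ?_
  have hp := List.mem_range.1 hp
  simp only [Function.comp_apply, Finset.mem_sdiff, Finset.mem_range, Finset.mem_image, hp,
    true_and, decide_not, Bool.not_eq_eq_eq_not, Bool.not_not, decide_eq_decide]
  constructor
  · intro h; exact ⟨_, h, by omega⟩
  · rintro ⟨q, hq, rfl⟩
    have := Finset.mem_range.1 (hS hq)
    convert hq using 1; omega

lemma flatMap_eq_wordOfUpSteps {s : ℕ → ℕ} (hs : Monotone s) (h0 : s 0 = 0) (N : ℕ) :
    (List.range N).flatMap (fun k => true :: List.replicate (s (k + 1) - s k) false) =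
      wordOfUpSteps (N + s N) ((Finset.range N).image fun k => k + s k) := by
  have hmono : StrictMono fun k => k + s k := strictMono_id.add_monotone hs
  induction N with
  | zero => simp [wordOfUpSteps, h0]
  | succ N ih =>
    have hlt : ∀ q ∈ (Finset.range N).image (fun k => k + s k), q < N + s N := by
      simp only [Finset.mem_image, Finset.mem_range]
      rintro q ⟨k, hk, rfl⟩
      exact hmono hk
    have hlen : N + 1 + s (N + 1) = N + s N + (s (N + 1) - s N + 1) := by
      have : s N ≤ s (N + 1) := hs (by omega)
      omega
    rw [List.range_succ, List.flatMap_append, ih, hlen]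
    conv_rhs => rw [wordOfUpSteps, List.range_add, List.map_append, Finset.range_add_one,
      Finset.image_insert]
    rw [wordOfUpSteps]
    congr 1
    · refine List.map_congr_left fun p hp => ?_
      have hp := List.mem_range.1 hp
      simp [Finset.mem_insert, hp.ne]
    · rw [List.range_succ_eq_map, List.map_cons, List.map_map, List.flatMap_singleton]
      congr 1
      · simp
      · rw [List.map_map, eq_comm, List.eq_replicate_iff]
        refine ⟨by simp, fun b hb => ?_⟩
        obtain ⟨q, -, rfl⟩ := List.mem_map.1 hb
        simp only [Function.comp_apply, Nat.succ_eq_add_one, Finset.mem_insert,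
          decide_eq_false_iff_not, not_or]
        exact ⟨by omega, fun h => (hlt _ h).not_ge (by omega)⟩

lemma Finset.eq_sdiff_of_card_le_card_add_card {α : Type*} [DecidableEq α] {s A B : Finset α}
    (hA : A ⊆ s) (hB : B ⊆ s) (hAB : Disjoint A B) (hcard : s.card ≤ A.card + B.card) :
    A = s \ B :=
  Finset.eq_of_subset_of_card_le (Finset.subset_sdiff.2 ⟨hA, hAB⟩)
    (by rw [Finset.card_sdiff_of_subset hB]; omega)

section upSteps

variable {n : ℕ}

/-- The `k`-th up-step of `psi σ` is preceded by `k` up-steps and `minUpTo σ (n - k)`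
down-steps. -/
def upSteps (σ : Equiv.Perm (Fin n)) : Finset ℕ :=
  (Finset.range n).image fun k => k + minUpTo σ (n - k)

variable (σ : Equiv.Perm (Fin n))

lemma monotone_minUpTo_sub : Monotone fun k => minUpTo σ (n - k) :=
  (minUpTo_antitone σ).comp (antitone_const_tsub (c := n))

lemma strictMono_add_minUpTo_sub : StrictMono fun k => k + minUpTo σ (n - k) :=
  strictMono_id.add_monotone (monotone_minUpTo_sub σ)

lemma upSteps_subset : upSteps σ ⊆ Finset.range (2 * n) := by
  intro p hp
  obtain ⟨k, hk, rfl⟩ := Finset.mem_image.1 hp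
  have := Finset.mem_range.1 hk
  have := minUpTo_le σ (n - k)
  simp only [Finset.mem_range]; omega

lemma card_upSteps : (upSteps σ).card = n := by
  rw [upSteps, Finset.card_image_of_injective _ (strictMono_add_minUpTo_sub σ).injective,
    Finset.card_range]

lemma psi_eq_wordOfUpSteps : psi σ = wordOfUpSteps (2 * n) (upSteps σ) := by
  have h := flatMap_eq_wordOfUpSteps (monotone_minUpTo_sub σ) (by simp [minUpTo_n]) n
  simp only [Nat.sub_self, minUpTo_zero, ← two_mul] at h
  rw [psi, upSteps, ← h]
  refine List.flatMap_congr fun k _ => ?_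
  rw [Nat.sub_sub, Nat.add_comm 1 k]

lemma upSteps_inv :
    upSteps σ⁻¹ = Finset.range (2 * n) \ (upSteps σ).image (2 * n - 1 - ·) := by
  refine Finset.eq_sdiff_of_card_le_card_add_card (upSteps_subset σ⁻¹) ?_ ?_ ?_
  · intro q hq
    obtain ⟨p, hp, rfl⟩ := Finset.mem_image.1 hq
    have := Finset.mem_range.1 (upSteps_subset σ hp)
    simp only [Finset.mem_range]; omega
  · refine Finset.disjoint_left.2 fun p hp hp' => ?_
    obtain ⟨k, hk, rfl⟩ := Finset.mem_image.1 hp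
    obtain ⟨_, hq, hkq⟩ := Finset.mem_image.1 hp'
    obtain ⟨l, hl, rfl⟩ := Finset.mem_image.1 hq
    simp only [Finset.mem_range] at hk hl
    have := minUpTo_add_minUpTo_inv_ne σ (j := n - l) (k := n - k) (by omega) (by omega)
    have := minUpTo_le σ (n - l)
    omega
  · rw [Finset.card_range, card_upSteps, Finset.card_image_of_injOn, card_upSteps]
    · omega
    intro p hp q hq hpq
    have := Finset.mem_range.1 (upSteps_subset σ hp)
    have := Finset.mem_range.1 (upSteps_subset σ hq)
    simp only at hpq; omega

lemma psi_inv : psi σ⁻¹ = (psi σ).reverse.map (fun b => !b) := by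
  rw [psi_eq_wordOfUpSteps, psi_eq_wordOfUpSteps,
    reverse_map_not_wordOfUpSteps (upSteps_subset σ), upSteps_inv]

lemma minUpTo_eq_of_upSteps_eq {τ : Equiv.Perm (Fin n)} (h : upSteps σ = upSteps τ) {r : ℕ}
    (hr : r ≤ n) : minUpTo σ r = minUpTo τ r := by
  have key : ∀ ρ : Equiv.Perm (Fin n), upSteps ρ = upSteps σ → ∀ k : Fin n,
      (k : ℕ) + minUpTo ρ (n - k) = (upSteps σ).orderEmbOfFin (card_upSteps σ) k :=
    fun ρ hρ => congrFun (Finset.orderEmbOfFin_unique _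
      (fun k => hρ ▸ Finset.mem_image_of_mem _ (Finset.mem_range.2 k.2))
      ((strictMono_add_minUpTo_sub ρ).comp Fin.val_strictMono))
  rcases r.eq_zero_or_pos with rfl | hr0
  · rfl
  have := (key σ rfl ⟨n - r, by omega⟩).trans (key τ h.symm ⟨n - r, by omega⟩).symm
  simpa [Nat.sub_sub_self hr] using this

end upSteps

lemma Avoids132.inv {n : ℕ} {σ : Equiv.Perm (Fin n)} (hσ : Avoids132 σ) : Avoids132 σ⁻¹ := by
  rintro ⟨i, j, k, hij, hjk, h1, h2⟩
  exact hσ ⟨σ⁻¹ i, σ⁻¹ k, σ⁻¹ j, h1, h2, by simpa using hij, by simpa using hjk⟩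

/-- If `σ j < τ j`, the value `σ j` occurs in `τ` after position `j`, while an earlier entry
of `τ` lies below it; this is a 132 pattern in `τ`. -/
lemma Avoids132.apply_le_of_eqOn_of_minUpTo_le {n : ℕ} {σ τ : Equiv.Perm (Fin n)}
    (hτ : Avoids132 τ) {j : Fin n} (hagree : ∀ i < j, σ i = τ i)
    (hm : minUpTo τ (j + 1) ≤ minUpTo σ (j + 1)) : τ j ≤ σ j := by
  by_contra! hlt
  have hlt' : (σ j : ℕ) < τ j := hlt
  have hσj := minUpTo_le_apply σ (i := j) (r := j + 1) (by omega)
  obtain ⟨i, hij, hi⟩ := (minUpTo_lt_iff τ (r := j + 1) (v := σ j + 1) (σ j).2).1 (by omega)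
  have hij : i < j := by
    refine lt_of_le_of_ne (Nat.lt_succ_iff.1 hij) fun hij => ?_
    subst hij; omega
  have hi : τ i < σ j := lt_of_le_of_ne (Fin.le_iff_val_le_val.2 (by omega))
    (by rw [← hagree i hij]; exact σ.injective.ne hij.ne)
  have hk : τ (τ⁻¹ (σ j)) = σ j := τ.apply_symm_apply _
  have hjk : j < τ⁻¹ (σ j) := by
    rcases lt_trichotomy (τ⁻¹ (σ j)) j with hkj | hkj | hkj
    · have := hagree _ hkj
      rw [hk, σ.injective.eq_iff] at this
      exact absurd this hkj.ne
    · rw [hkj] at hk; exact absurd hk hlt.ne'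
    · exact hkj
  exact hτ ⟨i, j, _, hij, hjk, by rwa [hk], by rwa [hk]⟩

lemma Avoids132.eq_of_minUpTo_eq {n : ℕ} {σ τ : Equiv.Perm (Fin n)} (hσ : Avoids132 σ)
    (hτ : Avoids132 τ) (h : ∀ r ≤ n, minUpTo σ r = minUpTo τ r) : σ = τ := by
  refine Equiv.ext fun j => ?_
  induction j using WellFoundedLT.induction with
  | _ j ih =>
    exact le_antisymm
      (hσ.apply_le_of_eqOn_of_minUpTo_le (fun i hi => (ih i hi).symm) (h _ j.2).le)
      (hτ.apply_le_of_eqOn_of_minUpTo_le ih (h _ j.2).ge)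

lemma Avoids132.eq_of_psi_eq {n : ℕ} {σ τ : Equiv.Perm (Fin n)} (hσ : Avoids132 σ)
    (hτ : Avoids132 τ) (h : psi σ = psi τ) : σ = τ := by
  rw [psi_eq_wordOfUpSteps, psi_eq_wordOfUpSteps] at h
  have hup := wordOfUpSteps_inj (upSteps_subset σ) (upSteps_subset τ) h
  exact hσ.eq_of_minUpTo_eq hτ fun r hr => minUpTo_eq_of_upSteps_eq σ hup hr

/-- `Ψ σ⁻¹` is the reflection of `Ψ σ` across the vertical line `x = n` (reverse the
word and swap up-steps with down-steps); consequently, `σ` is an involution iff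
`Ψ σ` is symmetric under this reflection. -/
theorem stmt19 (n : ℕ) (σ : Equiv.Perm (Fin n)) (h : Avoids132 σ) :
    psi σ⁻¹ = (psi σ).reverse.map (fun b => !b) ∧
      (σ⁻¹ = σ ↔ psi σ = (psi σ).reverse.map (fun b => !b)) :=
  ⟨psi_inv σ, fun hinv => by rw [← psi_inv, hinv],
    fun hsym => h.inv.eq_of_psi_eq h (by rw [psi_inv, ← hsym])⟩
end
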